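/- arXiv:1807.02781 — 6 statements merged into one kernel-verified Lean document; each statement's English description precedes it below -/
import Mathlib

section
/- Let k ≥ 1 and let A, B ∈ ℝ^k. Let I be a finite nonempty index set and for each i ∈ I let γ_i, η_i ∈ ℝ^k be vectors with ⟨A, γ_i⟩ > 0 and ⟨B, γ_i⟩ > 0 (dot products). For P ∈ ℝ^k with ⟨P, γ_i⟩ > 0 for all i, set λ(P) = max over i ∈ I of ⟨P, η_i⟩ / ⟨P, γ_i⟩, and for t ∈ [0,1] set A_t = (1−t)·A + t·B. Then for every t ∈ [0,1] one has ⟨A_t, γ_i⟩ > 0 for all i, and λ(A_t) ≤ max(λ(A), λ(B)). (Quasi-convexity of the displacement function along Euclidean segments of a simplex, Lemma 'lconvexity', first claim, in edge-length coordinates.) -/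
/-!
On the cone `⟨P, γ⟩ > 0` the sublevel set `{P | ⟨P, η⟩ / ⟨P, γ⟩ ≤ r}` is the half-space
`⟨P, η - r γ⟩ ≤ 0`, so each ratio is quasi-convex there; a finite maximum of quasi-convex
functions is quasi-convex, and the segment from `A` to `B` stays in the intersection of the cones.
-/

open Finset

theorem LinearMap.quasiconvexOn_div {𝕜 E : Type*} [Field 𝕜] [LinearOrder 𝕜]
    [IsStrictOrderedRing 𝕜] [AddCommGroup E] [Module 𝕜 E] {s : Set E} (hs : Convex 𝕜 s)
    (f g : E →ₗ[𝕜] 𝕜) (hg : ∀ x ∈ s, 0 < g x) :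
    QuasiconvexOn 𝕜 s (fun x => f x / g x) := by
  intro r
  have hsublevel : {x ∈ s | f x / g x ≤ r} = s ∩ {x | (f - r • g) x ≤ 0} := by
    ext x
    simp only [Set.mem_ofPred_eq, Set.mem_inter_iff, LinearMap.sub_apply,
      LinearMap.smul_apply, smul_eq_mul, sub_nonpos]
    exact and_congr_right fun hx => div_le_iff₀ (hg x hx)
  rw [hsublevel]
  exact hs.inter (convex_halfSpace_le (f - r • g).isLinear 0)

theorem QuasiconvexOn.finset_sup' {𝕜 E β ι : Type*} [Semiring 𝕜] [PartialOrder 𝕜]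
    [AddCommMonoid E] [SMul 𝕜 E] [SemilatticeSup β] {s : Set E} {t : Finset ι}
    (ht : t.Nonempty) {f : ι → E → β} (hf : ∀ i ∈ t, QuasiconvexOn 𝕜 s (f i)) :
    QuasiconvexOn 𝕜 s (t.sup' ht f) :=
  Finset.sup'_induction ht f (fun _ hf _ hg => hf.sup hg) hf

theorem displacement_quasiconvex_on_segment_general
    (k : ℕ) (A B : Fin k → ℝ)
    (I : Type*) [Fintype I] [Nonempty I]
    (γ η : I → Fin k → ℝ)
    (hA : ∀ i : I, 0 < ∑ j, A j * γ i j)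
    (hB : ∀ i : I, 0 < ∑ j, B j * γ i j) :
    ∀ t ∈ Set.Icc (0 : ℝ) 1,
      (∀ i : I, 0 < ∑ j, ((1 - t) • A + t • B) j * γ i j) ∧
      Finset.univ.sup' Finset.univ_nonempty
          (fun i : I => (∑ j, ((1 - t) • A + t • B) j * η i j) /
            (∑ j, ((1 - t) • A + t • B) j * γ i j))
        ≤ max
          (Finset.univ.sup' Finset.univ_nonempty
            (fun i : I => (∑ j, A j * η i j) / (∑ j, A j * γ i j)))
          (Finset.univ.sup' Finset.univ_nonempty
            (fun i : I => (∑ j, B j * η i j) / (∑ j, B j * γ i j))) := by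
  rintro t ⟨ht₀, ht₁⟩
  -- `pairing v P` unfolds definitionally to `∑ j, P j * v j`, the form used in the statement.
  let pairing (v : Fin k → ℝ) : (Fin k → ℝ) →ₗ[ℝ] ℝ := (dotProductBilin ℝ ℝ).flip v
  let domain : Set (Fin k → ℝ) := ⋂ i, {P | 0 < pairing (γ i) P}
  have hdomain : Convex ℝ domain :=
    convex_iInter fun i => convex_halfSpace_gt (pairing (γ i)).isLinear 0
  have hquasi : QuasiconvexOn ℝ domain
      (univ.sup' univ_nonempty fun i P => pairing (η i) P / pairing (γ i) P) :=
    QuasiconvexOn.finset_sup' _ fun i _ => (pairing (η i)).quasiconvexOn_div hdomain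
      (pairing (γ i)) fun _ hP => Set.mem_iInter.1 hP i
  have hAdom : A ∈ domain := Set.mem_iInter.2 hA
  have hBdom : B ∈ domain := Set.mem_iInter.2 hB
  have ht₁' : 0 ≤ 1 - t := sub_nonneg.2 ht₁
  have hcoeff : 1 - t + t = 1 := sub_add_cancel 1 t
  refine ⟨Set.mem_iInter.1 (hdomain hAdom hBdom ht₁' ht₀ hcoeff), ?_⟩
  have hmax := (quasiconvexOn_iff_le_max.1 hquasi).2 hAdom hBdom ht₁' ht₀ hcoeff
  simp only [Finset.sup'_apply] at hmax
  exact hmax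

/-- Quasi-convexity of the displacement function along Euclidean segments of a
simplex (Lemma `lconvexity`, first claim), in edge-length coordinates: the
displacement is the max over a finite set of candidates of the ratios
`⟨P, η i⟩ / ⟨P, γ i⟩`, and along the segment `A_t = (1-t)A + tB` it is bounded
by the max of the values at the endpoints. -/
theorem displacement_quasiconvex_on_segment
    (k : ℕ) (hk : 1 ≤ k) (A B : Fin k → ℝ)
    (I : Type*) [Fintype I] [Nonempty I]
    (γ η : I → Fin k → ℝ)
    (hA : ∀ i : I, 0 < ∑ j, A j * γ i j)
    (hB : ∀ i : I, 0 < ∑ j, B j * γ i j) :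
    ∀ t ∈ Set.Icc (0 : ℝ) 1,
      (∀ i : I, 0 < ∑ j, ((1 - t) • A + t • B) j * γ i j) ∧
      Finset.univ.sup' Finset.univ_nonempty
          (fun i : I => (∑ j, ((1 - t) • A + t • B) j * η i j) /
            (∑ j, ((1 - t) • A + t • B) j * γ i j))
        ≤ max
          (Finset.univ.sup' Finset.univ_nonempty
            (fun i : I => (∑ j, A j * η i j) / (∑ j, A j * γ i j)))
          (Finset.univ.sup' Finset.univ_nonempty
            (fun i : I => (∑ j, B j * η i j) / (∑ j, B j * γ i j))) :=
  displacement_quasiconvex_on_segment_general k A B I γ η hA hB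
end

section
/- Let k ≥ 1 and let A, B ∈ ℝ^k with a finite nonempty index set I and vectors γ_i, η_i ∈ ℝ^k satisfying ⟨A, γ_i⟩ > 0 and ⟨B, γ_i⟩ > 0 for all i ∈ I. Set λ(P) = max over i ∈ I of ⟨P, η_i⟩ / ⟨P, γ_i⟩ and A_t = (1−t)·A + t·B. If λ(A) > λ(B), then there exists ε ∈ (0, 1] such that the function t ↦ λ(A_t) is strictly decreasing on [0, ε]. (Lemma 'lconvexity', second claim: the displacement is strictly monotone near A when λ(A) > λ(B).) -/
open Finset

/-!
Along the segment each ratio `⟨A_t, η i⟩ / ⟨A_t, γ i⟩` is a linear fractional function of `t`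
with positive denominator, hence monotone on `[0, 1]`. The ratios realising `λ(A)` end below
`λ(B) < λ(A)`, so they are strictly decreasing; the others start strictly below `λ(A)` and, by
continuity, stay below the realising ones for small `t`. Near `A` the maximum is thus a maximum
of strictly decreasing functions.
-/

lemma exists_strictAntiOn_Icc_sup'
    {ι α β : Type*} [Fintype ι] [Nonempty ι]
    [LinearOrder α] [TopologicalSpace α] [OrderTopology α] [NoMaxOrder α] [DenselyOrdered α]
    [LinearOrder β] [TopologicalSpace β] [OrderClosedTopology β]
    {f : ι → α → β} {a b : α} (hab : a < b)
    (hcont : ∀ i, ContinuousWithinAt (f i) (Set.Ici a) a)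
    (hanti : ∀ i, f i a = univ.sup' univ_nonempty (fun i => f i a) →
      StrictAntiOn (f i) (Set.Icc a b)) :
    ∃ c ∈ Set.Ioc a b,
      StrictAntiOn (fun x => univ.sup' univ_nonempty (fun i => f i x)) (Set.Icc a c) := by
  obtain ⟨i₀, -, hi₀⟩ := exists_mem_eq_sup' univ_nonempty (fun i => f i a)
  have hbelow : ∀ᶠ x in nhdsWithin a (Set.Ici a),
      ∀ i, f i a < f i₀ a → f i x < f i₀ x := by
    refine Filter.eventually_all.2 fun i => ?_
    by_cases hi : f i a < f i₀ a
    · filter_upwards [(hcont i).eventually_lt (hcont i₀) hi] with x hx using fun _ => hx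
    · exact Filter.Eventually.of_forall fun _ h => absurd h hi
  obtain ⟨u, hau, hu⟩ := mem_nhdsGE_iff_exists_Icc_subset.1 hbelow
  refine ⟨min u b, ⟨lt_min hau hab, min_le_right _ _⟩, fun x hx y hy hxy => ?_⟩
  have hsub : Set.Icc a (min u b) ⊆ Set.Icc a b :=
    Set.Icc_subset_Icc_right (min_le_right _ _)
  have hy_below := hu (Set.Icc_subset_Icc_right (min_le_left _ _) hy)
  refine (sup'_lt_iff _).2 fun i _ => ?_
  rcases (le_sup' (fun i => f i a) (mem_univ i)).lt_or_eq with hi | hi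
  · calc f i y < f i₀ y := hy_below i (hi.trans_eq hi₀)
      _ < f i₀ x := hanti i₀ hi₀.symm (hsub hx) (hsub hy) hxy
      _ ≤ _ := le_sup' (fun i => f i x) (mem_univ i₀)
  · exact (hanti i hi (hsub hx) (hsub hy) hxy).trans_le (le_sup' (fun i => f i x) (mem_univ i))

lemma convex_combination_pos {r s t : ℝ} (hr : 0 < r) (hs : 0 < s) (ht : t ∈ Set.Icc 0 1) :
    0 < (1 - t) * r + t * s :=
  convex_Ioi (0 : ℝ) hr hs (sub_nonneg.2 ht.2) ht.1 (sub_add_cancel 1 t)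

lemma strictAntiOn_affine_div_affine {p q r s : ℝ} (hr : 0 < r) (hs : 0 < s)
    (h : q / s < p / r) :
    StrictAntiOn (fun t => ((1 - t) * p + t * q) / ((1 - t) * r + t * s)) (Set.Icc 0 1) := by
  intro u hu t ht hut
  rw [div_lt_div_iff₀ hs hr] at h
  rw [div_lt_div_iff₀ (convex_combination_pos hr hs ht) (convex_combination_pos hr hs hu)]
  -- The cross difference of two points of the segment factors as `(t - u) (q r - p s)`.
  nlinarith [mul_pos (sub_pos.2 hut) (sub_pos.2 h)]

lemma sub_smul_add_smul_dotProduct {k : Type*} [Fintype k] (A B v : k → ℝ) (t : ℝ) :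
    ((1 - t) • A + t • B) ⬝ᵥ v = (1 - t) * (A ⬝ᵥ v) + t * (B ⬝ᵥ v) := by
  rw [add_dotProduct, smul_dotProduct, smul_dotProduct, smul_eq_mul, smul_eq_mul]

theorem displacement_strictly_monotone_near_A_general
    (k : ℕ) (A B : Fin k → ℝ)
    (I : Type*) [Fintype I] [Nonempty I]
    (γ η : I → Fin k → ℝ)
    (hA : ∀ i : I, 0 < ∑ j, A j * γ i j)
    (hB : ∀ i : I, 0 < ∑ j, B j * γ i j)
    (hlt : Finset.univ.sup' Finset.univ_nonempty
        (fun i : I => (∑ j, B j * η i j) / (∑ j, B j * γ i j))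
      < Finset.univ.sup' Finset.univ_nonempty
        (fun i : I => (∑ j, A j * η i j) / (∑ j, A j * γ i j))) :
    ∃ ε : ℝ, ε ∈ Set.Ioc (0 : ℝ) 1 ∧
      StrictAntiOn
        (fun t : ℝ => Finset.univ.sup' Finset.univ_nonempty
          (fun i : I => (∑ j, ((1 - t) • A + t • B) j * η i j) /
            (∑ j, ((1 - t) • A + t • B) j * γ i j)))
        (Set.Icc (0 : ℝ) ε) := by
  change ∃ ε ∈ Set.Ioc (0 : ℝ) 1, StrictAntiOn (fun t : ℝ => univ.sup' univ_nonempty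
    fun i => ((1 - t) • A + t • B) ⬝ᵥ η i / ((1 - t) • A + t • B) ⬝ᵥ γ i) (Set.Icc 0 ε)
  simp only [sub_smul_add_smul_dotProduct]
  refine exists_strictAntiOn_Icc_sup' one_pos (fun i => ?_) (fun i hi => ?_)
  · refine (ContinuousAt.div (by fun_prop) (by fun_prop) ?_).continuousWithinAt
    simpa [dotProduct] using (hA i).ne'
  · refine strictAntiOn_affine_div_affine (hA i) (hB i) ?_
    simp only [sub_zero, one_mul, zero_mul, add_zero] at hi
    calc _ ≤ _ := le_sup' (fun i => (B ⬝ᵥ η i) / (B ⬝ᵥ γ i)) (mem_univ i)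
      _ < _ := hlt
      _ = _ := hi.symm

/-- Lemma `lconvexity`, second claim: if the displacement at `A` is strictly
bigger than at `B`, then along the segment `A_t = (1−t)A + tB` the displacement
`λ(A_t) = max_i ⟨A_t,η i⟩/⟨A_t,γ i⟩` is strictly decreasing near `A`. -/
theorem displacement_strictly_monotone_near_A
    (k : ℕ) (hk : 1 ≤ k) (A B : Fin k → ℝ)
    (I : Type*) [Fintype I] [Nonempty I]
    (γ η : I → Fin k → ℝ)
    (hA : ∀ i : I, 0 < ∑ j, A j * γ i j)
    (hB : ∀ i : I, 0 < ∑ j, B j * γ i j)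
    (hlt : Finset.univ.sup' Finset.univ_nonempty
        (fun i : I => (∑ j, B j * η i j) / (∑ j, B j * γ i j))
      < Finset.univ.sup' Finset.univ_nonempty
        (fun i : I => (∑ j, A j * η i j) / (∑ j, A j * γ i j))) :
    ∃ ε : ℝ, ε ∈ Set.Ioc (0 : ℝ) 1 ∧
      StrictAntiOn
        (fun t : ℝ => Finset.univ.sup' Finset.univ_nonempty
          (fun i : I => (∑ j, ((1 - t) • A + t • B) j * η i j) /
            (∑ j, ((1 - t) • A + t • B) j * γ i j)))
        (Set.Icc (0 : ℝ) ε) :=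
  displacement_strictly_monotone_near_A_general k A B I γ η hA hB hlt
end

section
/- Let k ≥ 1 and let A, B, γ, η ∈ ℝ^k with ⟨A, γ⟩ > 0, ⟨B, γ⟩ > 0, and ⟨A, η⟩ ≥ 0. Set C = max( ⟨A, γ⟩/⟨B, γ⟩ , ⟨B, γ⟩/⟨A, γ⟩ ), A_t = (1−t)·A + t·B, and F(t) = ⟨A_t, η⟩/⟨A_t, γ⟩. Suppose that ⟨B, η⟩/⟨B, γ⟩ ≥ ⟨A, η⟩/⟨A, γ⟩. Then for every t ∈ [0,1] the derivative of F satisfies 0 ≤ F'(t) ≤ C · ⟨B, η⟩/⟨B, γ⟩. (Lemma 'derivative', first claim: bound on the steepness of a candidate's stretching factor along a segment.) -/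
open Finset

/-!
With `a = ⟨A,γ⟩`, `b = ⟨B,γ⟩`, `p = ⟨A,η⟩`, `q = ⟨B,η⟩`, the function `F` is a quotient of two
affine functions of `t`, so `F'(t) = (aq - bp) / D_t²` with `D_t = (1-t)a + tb`. The numerator
lies between `0` (this is `p/a ≤ q/b`) and `aq`, and `D_t ≥ min a b`; finally
`a / (min a b)² = C / b`.
-/

theorem sum_smul_add_smul_mul {ι R : Type*} [Fintype ι] [CommSemiring R] (A B v : ι → R) (a b : R) :
    ∑ j, (a • A + b • B) j * v j = a * ∑ j, A j * v j + b * ∑ j, B j * v j := by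
  simp only [Pi.add_apply, Pi.smul_apply, smul_eq_mul, add_mul, sum_add_distrib, mul_sum, mul_assoc]

theorem hasDerivAt_segment_div (a b p q t : ℝ) (hD : (1 - t) * a + t * b ≠ 0) :
    HasDerivAt (fun s => ((1 - s) * p + s * q) / ((1 - s) * a + s * b))
      ((a * q - b * p) / ((1 - t) * a + t * b) ^ 2) t := by
  have hlin (x y : ℝ) : HasDerivAt (fun s => (1 - s) * x + s * y) (y - x) t :=
    ((((hasDerivAt_id t).const_sub 1).mul_const x).add
      ((hasDerivAt_id t).mul_const y)).congr_deriv (by ring)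
  exact ((hlin p q).div (hlin a b) hD).congr_deriv (by ring)

theorem div_sq_min_eq_max_div {a b : ℝ} (ha : 0 < a) (hb : 0 < b) :
    a / min a b ^ 2 = max (a / b) (b / a) / b := by
  rcases le_total a b with h | h
  · rw [min_eq_left h, max_eq_right ((div_le_div_iff₀ hb ha).2 (by nlinarith))]
    field_simp
  · rw [min_eq_right h, max_eq_left ((div_le_div_iff₀ ha hb).2 (by nlinarith))]
    field_simp

theorem min_le_segment (a b : ℝ) {t : ℝ} (ht : t ∈ Set.Icc (0 : ℝ) 1) :
    min a b ≤ (1 - t) * a + t * b :=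
  Convex.min_le_combo a b (sub_nonneg.2 ht.2) ht.1 (sub_add_cancel 1 t)

theorem segment_div_deriv_bounds {a b p q t : ℝ} (ha : 0 < a) (hb : 0 < b) (hp : 0 ≤ p)
    (hpq : p / a ≤ q / b) (ht : t ∈ Set.Icc (0 : ℝ) 1) :
    0 ≤ (a * q - b * p) / ((1 - t) * a + t * b) ^ 2 ∧
      (a * q - b * p) / ((1 - t) * a + t * b) ^ 2 ≤ max (a / b) (b / a) * (q / b) := by
  have hmin := min_le_segment a b ht
  have hmin_pos : 0 < min a b := lt_min ha hb
  have hcross : b * p ≤ a * q := by rw [div_le_div_iff₀ ha hb] at hpq; linarith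
  have hq : 0 ≤ q := by nlinarith
  refine ⟨div_nonneg (sub_nonneg.2 hcross) (sq_nonneg _), ?_⟩
  calc (a * q - b * p) / ((1 - t) * a + t * b) ^ 2
      ≤ a * q / min a b ^ 2 := by
        gcongr
        linarith [mul_nonneg hb.le hp]
    _ = max (a / b) (b / a) * (q / b) := by
        rw [mul_comm a, mul_div_assoc, div_sq_min_eq_max_div ha hb]; ring

theorem stretching_factor_deriv_bound_general
    (k : ℕ) (A B γ η : Fin k → ℝ)
    (hA : 0 < ∑ j, A j * γ j) (hB : 0 < ∑ j, B j * γ j)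
    (hη : 0 ≤ ∑ j, A j * η j)
    (hmono : (∑ j, A j * η j) / (∑ j, A j * γ j) ≤
      (∑ j, B j * η j) / (∑ j, B j * γ j)) :
    ∀ t ∈ Set.Icc (0 : ℝ) 1,
      0 ≤ deriv
          (fun s : ℝ => (∑ j, ((1 - s) • A + s • B) j * η j) /
            (∑ j, ((1 - s) • A + s • B) j * γ j)) t ∧
      deriv
          (fun s : ℝ => (∑ j, ((1 - s) • A + s • B) j * η j) /
            (∑ j, ((1 - s) • A + s • B) j * γ j)) t ≤
        max ((∑ j, A j * γ j) / (∑ j, B j * γ j))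
            ((∑ j, B j * γ j) / (∑ j, A j * γ j)) *
          ((∑ j, B j * η j) / (∑ j, B j * γ j)) := by
  intro t ht
  simp only [sum_smul_add_smul_mul]
  have hD : 0 < (1 - t) * ∑ j, A j * γ j + t * ∑ j, B j * γ j :=
    (lt_min hA hB).trans_le (min_le_segment _ _ ht)
  rw [(hasDerivAt_segment_div _ _ _ _ t hD.ne').deriv]
  exact segment_div_deriv_bounds hA hB hη hmono ht

/-- Lemma `derivative`, first claim: if the stretching factor of the candidate
at `B` is at least that at `A`, then along the segment `A_t = (1−t)A + tB` the
derivative of `F(t) = ⟨A_t,η⟩/⟨A_t,γ⟩` satisfies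
`0 ≤ F'(t) ≤ C·⟨B,η⟩/⟨B,γ⟩`, where
`C = max(⟨A,γ⟩/⟨B,γ⟩, ⟨B,γ⟩/⟨A,γ⟩)`. -/
theorem stretching_factor_deriv_bound
    (k : ℕ) (hk : 1 ≤ k) (A B γ η : Fin k → ℝ)
    (hA : 0 < ∑ j, A j * γ j) (hB : 0 < ∑ j, B j * γ j)
    (hη : 0 ≤ ∑ j, A j * η j)
    (hmono : (∑ j, A j * η j) / (∑ j, A j * γ j) ≤
      (∑ j, B j * η j) / (∑ j, B j * γ j)) :
    ∀ t ∈ Set.Icc (0 : ℝ) 1,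
      0 ≤ deriv
          (fun s : ℝ => (∑ j, ((1 - s) • A + s • B) j * η j) /
            (∑ j, ((1 - s) • A + s • B) j * γ j)) t ∧
      deriv
          (fun s : ℝ => (∑ j, ((1 - s) • A + s • B) j * η j) /
            (∑ j, ((1 - s) • A + s • B) j * γ j)) t ≤
        max ((∑ j, A j * γ j) / (∑ j, B j * γ j))
            ((∑ j, B j * γ j) / (∑ j, A j * γ j)) *
          ((∑ j, B j * η j) / (∑ j, B j * γ j)) :=
  stretching_factor_deriv_bound_general k A B γ η hA hB hη hmono
end

section
/- Let k ≥ 1 and let A, B, γ, η ∈ ℝ^k with A ≠ B, ⟨A, γ⟩ > 0, ⟨B, γ⟩ > 0, and ⟨A, η⟩ ≥ 0. Set C = max( ⟨A, γ⟩/⟨B, γ⟩ , ⟨B, γ⟩/⟨A, γ⟩ ). Suppose that ⟨B, η⟩/⟨B, γ⟩ ≥ ⟨A, η⟩/⟨A, γ⟩. Then for every t ∈ [0,1], with P = (1−t)·A + t·B, one has ⟨P, η⟩/⟨P, γ⟩ ≥ ⟨B, η⟩/⟨B, γ⟩ − C · (⟨B, η⟩/⟨B, γ⟩) · ‖P − B‖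 / ‖A − B‖, where ‖·‖ is the standard Euclidean norm on ℝ^k. (Lemma 'derivative', second claim: a lower bound for the stretching factor of a candidate at points of a Euclidean segment in terms of its value at an endpoint.) -/
open Finset

/-!
Along the segment both lengths `⟨P, γ⟩` and `⟨P, η⟩` are affine in `t`, and
`‖P - B‖ / ‖A - B‖ = 1 - t`. Writing `a, b, u, v` for the lengths of `γ` and `η` at `A` and `B`
and `D = (1 - t) a + t b`, one has
`v / b - ⟨P, η⟩ / ⟨P, γ⟩ = (1 - t) (v a - u b) / (b D) ≤ (1 - t) (v / b) (a / D)`,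
and `a / D ≤ C` because `D ≥ min a b`; the factor `v / b ≥ u / a ≥ 0` keeps the last
estimate monotone.
-/

lemma div_convexComb_le_max_div {a b t : ℝ} (ha : 0 < a) (hb : 0 < b) (ht0 : 0 ≤ t)
    (ht1 : t ≤ 1) :
    a / ((1 - t) * a + t * b) ≤ max (a / b) (b / a) := by
  rcases le_total a b with hab | hba
  · have hD : a ≤ (1 - t) * a + t * b := by nlinarith
    calc a / ((1 - t) * a + t * b) ≤ a / a := div_le_div_of_nonneg_left ha.le ha hD
      _ = 1 := div_self ha.ne'
      _ ≤ b / a := (one_le_div ha).mpr hab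
      _ ≤ _ := le_max_right _ _
  · have hD : b ≤ (1 - t) * a + t * b := by nlinarith
    exact (div_le_div_of_nonneg_left ha.le hb hD).trans (le_max_left _ _)

lemma div_convexComb_ge_sub {a b u v t : ℝ} (ha : 0 < a) (hb : 0 < b) (hu : 0 ≤ u)
    (hmono : u / a ≤ v / b) (ht0 : 0 ≤ t) (ht1 : t ≤ 1) :
    v / b - max (a / b) (b / a) * (v / b) * (1 - t) ≤
      ((1 - t) * u + t * v) / ((1 - t) * a + t * b) := by
  have hD : 0 < (1 - t) * a + t * b := by
    rcases eq_or_lt_of_le ht1 with rfl | ht1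
    · simpa using hb
    · nlinarith [mul_pos (sub_pos.mpr ht1) ha]
  set D := (1 - t) * a + t * b
  have hvb : 0 ≤ v / b := (div_nonneg hu ha.le).trans hmono
  have hdiff : v / b - ((1 - t) * u + t * v) / D =
      (1 - t) * (v / b) * (a / D) - (1 - t) * u / D := by
    field_simp
    ring
  have hmain : (1 - t) * (v / b) * (a / D) ≤ (1 - t) * (v / b) * max (a / b) (b / a) := by
    gcongr
    exact div_convexComb_le_max_div ha hb ht0 ht1
  have hu_term : 0 ≤ (1 - t) * u / D := by positivity
  linarith

lemma sum_convexComb_mul {ι : Type*} [Fintype ι] (A B x : EuclideanSpace ℝ ι) (t : ℝ) :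
    ∑ j, ((1 - t) • A + t • B) j * x j = (1 - t) * ∑ j, A j * x j + t * ∑ j, B j * x j := by
  simp only [PiLp.add_apply, PiLp.smul_apply, smul_eq_mul, add_mul, mul_assoc, sum_add_distrib,
    ← mul_sum]

lemma norm_convexComb_sub_right_div {E : Type*} [NormedAddCommGroup E] [NormedSpace ℝ E]
    {A B : E} (hAB : A ≠ B) {t : ℝ} (ht1 : t ≤ 1) :
    ‖((1 - t) • A + t • B) - B‖ / ‖A - B‖ = 1 - t := by
  have hPB : ((1 - t) • A + t • B) - B = (1 - t) • (A - B) := by module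
  rw [hPB, norm_smul, Real.norm_of_nonneg (sub_nonneg.mpr ht1),
    mul_div_cancel_right₀ _ (norm_ne_zero_iff.mpr (sub_ne_zero.mpr hAB))]

theorem stretching_factor_lower_bound_on_segment_general
    (k : ℕ) (A B γ η : EuclideanSpace ℝ (Fin k))
    (hAB : A ≠ B)
    (hA : 0 < ∑ j, A j * γ j) (hB : 0 < ∑ j, B j * γ j)
    (hη : 0 ≤ ∑ j, A j * η j)
    (hmono : (∑ j, A j * η j) / (∑ j, A j * γ j) ≤
      (∑ j, B j * η j) / (∑ j, B j * γ j)) :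
    ∀ t ∈ Set.Icc (0 : ℝ) 1,
      (∑ j, ((1 - t) • A + t • B) j * η j) /
          (∑ j, ((1 - t) • A + t • B) j * γ j) ≥
        (∑ j, B j * η j) / (∑ j, B j * γ j) -
          max ((∑ j, A j * γ j) / (∑ j, B j * γ j))
              ((∑ j, B j * γ j) / (∑ j, A j * γ j)) *
            ((∑ j, B j * η j) / (∑ j, B j * γ j)) *
            (‖((1 - t) • A + t • B) - B‖ / ‖A - B‖) := by
  rintro t ⟨ht0, ht1⟩
  rw [norm_convexComb_sub_right_div hAB ht1, sum_convexComb_mul, sum_convexComb_mul]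
  exact div_convexComb_ge_sub hA hB hη hmono ht0 ht1

/-- Lemma `derivative`, second claim: lower bound for the stretching factor of
a candidate at points `P = (1−t)A + tB` of a Euclidean segment, in terms of its
value at the endpoint `B`:
`⟨P,η⟩/⟨P,γ⟩ ≥ ⟨B,η⟩/⟨B,γ⟩ − C·(⟨B,η⟩/⟨B,γ⟩)·‖P−B‖/‖A−B‖`,
with `C = max(⟨A,γ⟩/⟨B,γ⟩, ⟨B,γ⟩/⟨A,γ⟩)` and `‖·‖` the Euclidean norm. -/
theorem stretching_factor_lower_bound_on_segment
    (k : ℕ) (hk : 1 ≤ k) (A B γ η : EuclideanSpace ℝ (Fin k))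
    (hAB : A ≠ B)
    (hA : 0 < ∑ j, A j * γ j) (hB : 0 < ∑ j, B j * γ j)
    (hη : 0 ≤ ∑ j, A j * η j)
    (hmono : (∑ j, A j * η j) / (∑ j, A j * γ j) ≤
      (∑ j, B j * η j) / (∑ j, B j * γ j)) :
    ∀ t ∈ Set.Icc (0 : ℝ) 1,
      (∑ j, ((1 - t) • A + t • B) j * η j) /
          (∑ j, ((1 - t) • A + t • B) j * γ j) ≥
        (∑ j, B j * η j) / (∑ j, B j * γ j) -
          max ((∑ j, A j * γ j) / (∑ j, B j * γ j))
              ((∑ j, B j * γ j) / (∑ j, A j * γ j)) *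
            ((∑ j, B j * η j) / (∑ j, B j * γ j)) *
            (‖((1 - t) • A + t • B) - B‖ / ‖A - B‖) :=
  stretching_factor_lower_bound_on_segment_general k A B γ η hAB hA hB hη hmono
end

section
/- Let S be a nonempty type, let Λ : S → S → ℝ satisfy Λ(x,y) > 0 for all x, y and the multiplicative triangle inequality Λ(x,z) ≤ Λ(x,y)·Λ(y,z) for all x, y, z, and let φ : S → S satisfy Λ(φ x, φ y) = Λ(x, y) for all x, y. Let X ∈ S, let k > 0 and A > 0 be real numbers, and let N ∈ ℕ. If A·kⁿ ≤ Λ(X, φⁿ X) for every n ≥ N (where φⁿ is the n-fold iterate of φ), then k ≤ Λ(Y, φ Y) for every Y ∈ S; in particular k ≤ λ(φ) := inf over Y of Λ(Y, φ Y). (Lemma 'triangin'.) -/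
/-!
Going from `Y` to `φⁿ X` in `n` steps of length `Λ(Y, φY)`, the triangle inequality and
`φ`-invariance give `Λ(X, φⁿX) ≤ Λ(X, Y) Λ(Y, X) Λ(Y, φY)ⁿ`. Against the lower bound `A kⁿ`
this forces `k ≤ Λ(Y, φY)`, since otherwise `(k / Λ(Y, φY))ⁿ` would stay bounded.
-/

open Filter

lemma le_of_eventually_mul_pow_le {A C k r : ℝ} (hA : 0 < A) (hr : 0 < r)
    (h : ∀ᶠ n : ℕ in atTop, A * k ^ n ≤ C * r ^ n) : k ≤ r := by
  by_contra! hrk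
  have hunbounded : Tendsto (fun n : ℕ => (k / r) ^ n) atTop atTop :=
    tendsto_pow_atTop_atTop_of_one_lt ((one_lt_div hr).mpr hrk)
  obtain ⟨n, hlarge, hn⟩ := ((hunbounded.eventually_gt_atTop (C / A)).and h).exists
  have hbounded : (k / r) ^ n ≤ C / A := by
    rw [div_pow, div_le_div_iff₀ (pow_pos hr n) hA]
    linarith
  linarith

section Displacement

variable {S : Type*} {Λ : S → S → ℝ} {φ : S → S}

lemma le_displacement_pow_mul (htri : ∀ x y z : S, Λ x z ≤ Λ x y * Λ y z)
    (hiso : ∀ x y : S, Λ (φ x) (φ y) = Λ x y) {Y : S} (hY : 0 ≤ Λ Y (φ Y)) (X : S) (n : ℕ) :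
    Λ Y (φ^[n] X) ≤ Λ Y (φ Y) ^ n * Λ Y X := by
  induction n with
  | zero => simp
  | succ n ih =>
    calc Λ Y (φ^[n + 1] X) ≤ Λ Y (φ Y) * Λ (φ Y) (φ (φ^[n] X)) := by
          rw [Function.iterate_succ_apply']
          exact htri _ _ _
      _ = Λ Y (φ Y) * Λ Y (φ^[n] X) := by rw [hiso]
      _ ≤ Λ Y (φ Y) * (Λ Y (φ Y) ^ n * Λ Y X) := mul_le_mul_of_nonneg_left ih hY
      _ = Λ Y (φ Y) ^ (n + 1) * Λ Y X := by ring

lemma orbit_le_mul_displacement_pow (hpos : ∀ x y : S, 0 < Λ x y)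
    (htri : ∀ x y z : S, Λ x z ≤ Λ x y * Λ y z)
    (hiso : ∀ x y : S, Λ (φ x) (φ y) = Λ x y) (X Y : S) (n : ℕ) :
    Λ X (φ^[n] X) ≤ Λ X Y * Λ Y X * Λ Y (φ Y) ^ n :=
  calc Λ X (φ^[n] X) ≤ Λ X Y * Λ Y (φ^[n] X) := htri _ _ _
    _ ≤ Λ X Y * (Λ Y (φ Y) ^ n * Λ Y X) :=
        mul_le_mul_of_nonneg_left
          (le_displacement_pow_mul htri hiso (hpos _ _).le X n) (hpos _ _).le
    _ = Λ X Y * Λ Y X * Λ Y (φ Y) ^ n := by ring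

end Displacement

theorem triangin_general
    (S : Type*) [Nonempty S] (Λ : S → S → ℝ)
    (hpos : ∀ x y : S, 0 < Λ x y)
    (htri : ∀ x y z : S, Λ x z ≤ Λ x y * Λ y z)
    (φ : S → S)
    (hiso : ∀ x y : S, Λ (φ x) (φ y) = Λ x y)
    (X : S) (k A : ℝ) (hA : 0 < A) (N : ℕ)
    (hgrowth : ∀ n : ℕ, N ≤ n → A * k ^ n ≤ Λ X (φ^[n] X)) :
    (∀ Y : S, k ≤ Λ Y (φ Y)) ∧ k ≤ ⨅ Y : S, Λ Y (φ Y) := by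
  have hdisplacement (Y : S) : k ≤ Λ Y (φ Y) := by
    refine le_of_eventually_mul_pow_le (C := Λ X Y * Λ Y X) hA (hpos _ _) ?_
    filter_upwards [eventually_ge_atTop N] with n hn
    exact (hgrowth n hn).trans (orbit_le_mul_displacement_pow hpos htri hiso X Y n)
  exact ⟨hdisplacement, le_ciInf hdisplacement⟩

/-- Lemma `triangin`: if `Λ` is a positive stretching factor satisfying the
multiplicative triangle inequality, `φ` acts by `Λ`-isometries, and
`A·kⁿ ≤ Λ(X, φⁿX)` for all large `n`, then `k ≤ Λ(Y, φY)` for every `Y`; in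
particular `k ≤ λ(φ) = inf_Y Λ(Y, φY)`. -/
theorem triangin
    (S : Type*) [Nonempty S] (Λ : S → S → ℝ)
    (hpos : ∀ x y : S, 0 < Λ x y)
    (htri : ∀ x y z : S, Λ x z ≤ Λ x y * Λ y z)
    (φ : S → S)
    (hiso : ∀ x y : S, Λ (φ x) (φ y) = Λ x y)
    (X : S) (k A : ℝ) (hk : 0 < k) (hA : 0 < A) (N : ℕ)
    (hgrowth : ∀ n : ℕ, N ≤ n → A * k ^ n ≤ Λ X (φ^[n] X)) :
    (∀ Y : S, k ≤ Λ Y (φ Y)) ∧ k ≤ ⨅ Y : S, Λ Y (φ Y) :=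
  triangin_general S Λ hpos htri φ hiso X k A hA N hgrowth
end

section
/- Let S be a nonempty type, let Λ : S → S → ℝ satisfy Λ(x,y) > 0 for all x, y and the multiplicative triangle inequality Λ(x,z) ≤ Λ(x,y)·Λ(y,z) for all x, y, z, and let φ : S → S satisfy Λ(φ x, φ y) = Λ(x, y) for all x, y. Let X ∈ S and suppose that Λ(X, φᵏ X) = (Λ(X, φ X))ᵏ for every k ≥ 1 (where φᵏ is the k-fold iterate of φ). Then Λ(X, φ X) ≤ Λ(Y, φ Y) for every Y ∈ S; that is, X is a global minimizer of the displacement function Y ↦ Λ(Y, φ Y). (Step 'TT(φ) ⊆ Min(φ)' in the proof of Theorem 'Theoremtt': a point supporting a partial train track minimizes the displacement.) -/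
/-!
Conjugating by `Y` gives `Λ(X, φᵏX) ≤ Λ(X, Y) · Λ(Y, φᵏY) · Λ(Y, X) ≤ C · Λ(Y, φY)ᵏ`, since `φᵏ`
is an isometry and displacement is submultiplicative along an orbit. For a train track point the
left side is exactly `Λ(X, φX)ᵏ`, and a `k`-th power bounded by a constant multiple of another
`k`-th power for every `k` forces `Λ(X, φX) ≤ Λ(Y, φY)`.
-/

lemma le_of_forall_pow_le_mul_pow {a b C : ℝ} (hb : 0 < b)
    (h : ∀ k : ℕ, 1 ≤ k → a ^ k ≤ C * b ^ k) : a ≤ b := by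
  by_contra! hba
  have hq : 1 < a / b := (one_lt_div hb).2 hba
  obtain ⟨n, hn⟩ := pow_unbounded_of_one_lt C hq
  have hbound : (a / b) ^ (n + 1) ≤ C := by
    rw [div_pow, div_le_iff₀ (pow_pos hb _)]
    exact h _ n.succ_pos
  exact hn.not_ge ((pow_le_pow_right₀ hq.le n.le_succ).trans hbound)

section Displacement

variable {S : Type*} {Λ : S → S → ℝ} {φ : S → S}

lemma iterate_isometry (hiso : ∀ x y, Λ (φ x) (φ y) = Λ x y) (k : ℕ) (x y : S) :
    Λ (φ^[k] x) (φ^[k] y) = Λ x y := by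
  induction k generalizing x y with
  | zero => rfl
  | succ k ih => rw [Function.iterate_succ_apply, Function.iterate_succ_apply, ih, hiso]

lemma displacement_iterate_le_pow (hnonneg : ∀ x y, 0 ≤ Λ x y)
    (htri : ∀ x y z, Λ x z ≤ Λ x y * Λ y z) (hiso : ∀ x y, Λ (φ x) (φ y) = Λ x y)
    (Y : S) {k : ℕ} (hk : 1 ≤ k) : Λ Y (φ^[k] Y) ≤ Λ Y (φ Y) ^ k := by
  induction k, hk using Nat.le_induction with
  | base => simp
  | succ k _ ih =>
    calc Λ Y (φ^[k + 1] Y) ≤ Λ Y (φ^[k] Y) * Λ (φ^[k] Y) (φ^[k] (φ Y)) := by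
          rw [← Function.iterate_succ_apply]
          exact htri _ _ _
      _ = Λ Y (φ^[k] Y) * Λ Y (φ Y) := by rw [iterate_isometry hiso]
      _ ≤ Λ Y (φ Y) ^ k * Λ Y (φ Y) := mul_le_mul_of_nonneg_right ih (hnonneg _ _)
      _ = Λ Y (φ Y) ^ (k + 1) := (pow_succ _ _).symm

lemma displacement_iterate_le_conj (hnonneg : ∀ x y, 0 ≤ Λ x y)
    (htri : ∀ x y z, Λ x z ≤ Λ x y * Λ y z) (hiso : ∀ x y, Λ (φ x) (φ y) = Λ x y)
    (X Y : S) (k : ℕ) :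
    Λ X (φ^[k] X) ≤ Λ X Y * Λ Y (φ^[k] Y) * Λ Y X :=
  calc Λ X (φ^[k] X) ≤ Λ X (φ^[k] Y) * Λ (φ^[k] Y) (φ^[k] X) := htri _ _ _
    _ ≤ Λ X Y * Λ Y (φ^[k] Y) * Λ (φ^[k] Y) (φ^[k] X) :=
        mul_le_mul_of_nonneg_right (htri _ _ _) (hnonneg _ _)
    _ = Λ X Y * Λ Y (φ^[k] Y) * Λ Y X := by rw [iterate_isometry hiso]

end Displacement

theorem train_track_point_minimizes_displacement_general
    (S : Type*) (Λ : S → S → ℝ)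
    (hpos : ∀ x y : S, 0 < Λ x y)
    (htri : ∀ x y z : S, Λ x z ≤ Λ x y * Λ y z)
    (φ : S → S)
    (hiso : ∀ x y : S, Λ (φ x) (φ y) = Λ x y)
    (X : S)
    (htt : ∀ k : ℕ, 1 ≤ k → Λ X (φ^[k] X) = (Λ X (φ X)) ^ k) :
    ∀ Y : S, Λ X (φ X) ≤ Λ Y (φ Y) := by
  intro Y
  have hnonneg : ∀ x y, 0 ≤ Λ x y := fun x y => (hpos x y).le
  refine le_of_forall_pow_le_mul_pow (C := Λ X Y * Λ Y X) (hpos Y (φ Y)) fun k hk => ?_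
  calc Λ X (φ X) ^ k = Λ X (φ^[k] X) := (htt k hk).symm
    _ ≤ Λ X Y * Λ Y (φ^[k] Y) * Λ Y X := displacement_iterate_le_conj hnonneg htri hiso X Y k
    _ ≤ Λ X Y * Λ Y (φ Y) ^ k * Λ Y X :=
        mul_le_mul_of_nonneg_right (mul_le_mul_of_nonneg_left
          (displacement_iterate_le_pow hnonneg htri hiso Y hk) (hnonneg _ _)) (hnonneg _ _)
    _ = Λ X Y * Λ Y X * Λ Y (φ Y) ^ k := by ring

/-- Step `TT(φ) ⊆ Min(φ)` in the proof of Theorem `Theoremtt`: if `Λ` is a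
positive stretching factor satisfying the multiplicative triangle inequality,
`φ` acts by `Λ`-isometries, and `X` satisfies
`Λ(X, φᵏX) = Λ(X, φX)ᵏ` for all `k ≥ 1` (as does any point supporting a
partial train track), then `X` globally minimizes the displacement
`Y ↦ Λ(Y, φY)`. -/
theorem train_track_point_minimizes_displacement
    (S : Type*) [Nonempty S] (Λ : S → S → ℝ)
    (hpos : ∀ x y : S, 0 < Λ x y)
    (htri : ∀ x y z : S, Λ x z ≤ Λ x y * Λ y z)
    (φ : S → S)
    (hiso : ∀ x y : S, Λ (φ x) (φ y) = Λ x y)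
    (X : S)
    (htt : ∀ k : ℕ, 1 ≤ k → Λ X (φ^[k] X) = (Λ X (φ X)) ^ k) :
    ∀ Y : S, Λ X (φ X) ≤ Λ Y (φ Y) :=
  train_track_point_minimizes_displacement_general S Λ hpos htri φ hiso X htt
end
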